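/- arXiv:2102.05564 — 4 statements merged into one kernel-verified Lean document; each statement's English description precedes it below -/
import Mathlib

section
/- There exists an absolute constant C ≥ 1 such that the following holds. Let P > 1, let 0 ≤ ε < 1/(C·P³), and let p₁, p₂, p₃ be distinct primes in [P, 2P] with ‖pᵢ·αⱼ − pⱼ·αᵢ‖ < ε for all i, j ∈ {1,2,3}, where α₁, α₂, α₃ ∈ ℝ/ℤ. If α ∈ ℝ/ℤ satisfies ‖p₁·α − α₁‖ < ε/(2p₂) and ‖p₂·α − α₂‖ < ε/(2p₁), then ‖p₃·α − α₃‖ ≤ C·ε/P. -/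
/-!
Put `β = p₃ α - α₃`. Multiplying by `p₁` and using the compatibility of `α₁` with `α₃` and of
`α` with `α₁` gives `‖p₁ β‖ < 2ε`, and likewise `‖p₂ β‖ < 2ε`. Lifting `β` to `x ∈ ℝ`, with
`kᵢ` the integer nearest to `pᵢ x`, the integer `k₁ p₂ - k₂ p₁` has absolute value below
`2ε (p₁ + p₂) < 1`, so it vanishes. Since `p₁` and `p₂` are coprime, `p₁ ∣ k₁`, and then
`‖β‖ ≤ |x - k₁ / p₁| < 2ε / p₁ ≤ 2ε / P`.
-/

section Compatibility

variable {E : Type*} [SeminormedAddCommGroup E]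

lemma nsmul_nsmul_sub_eq (q r : ℕ) (a b c : E) :
    q • (r • a - c) = r • (q • a - b) - (q • c - r • b) := by
  simp only [smul_sub, smul_comm q r a]
  abel

lemma norm_nsmul_nsmul_sub_le (q r : ℕ) (a b c : E) :
    ‖q • (r • a - c)‖ ≤ r * ‖q • a - b‖ + ‖q • c - r • b‖ := by
  rw [nsmul_nsmul_sub_eq q r a b c]
  exact (norm_sub_le _ _).trans (add_le_add_left norm_nsmul_le _)

lemma norm_nsmul_nsmul_sub_le_two_mul {q r s : ℕ} {a b c : E} {ε : ℝ} (hs : 0 < s)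
    (hrs : (r : ℝ) ≤ 2 * s) (ha : ‖q • a - b‖ ≤ ε / (2 * s)) (hc : ‖q • c - r • b‖ ≤ ε) :
    ‖q • (r • a - c)‖ ≤ 2 * ε := by
  have hs' : (0 : ℝ) < 2 * s := by positivity
  have hra : (r : ℝ) * ‖q • a - b‖ ≤ ε :=
    calc (r : ℝ) * ‖q • a - b‖ ≤ 2 * s * (ε / (2 * s)) := by gcongr
      _ = ε := by field_simp
  linarith [norm_nsmul_nsmul_sub_le q r a b c]

end Compatibility

lemma Int.mul_eq_mul_of_abs_mul_sub_le {p q : ℕ} {x δ : ℝ} {k₁ k₂ : ℤ}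
    (h₁ : |p * x - k₁| ≤ δ) (h₂ : |q * x - k₂| ≤ δ) (hδ : (p + q) * δ < 1) :
    k₁ * q = k₂ * p := by
  have key : |((k₁ * q - k₂ * p : ℤ) : ℝ)| < 1 := by
    have hsplit : ((k₁ * q - k₂ * p : ℤ) : ℝ) = p * (q * x - k₂) - q * (p * x - k₁) := by
      push_cast; ring
    calc |((k₁ * q - k₂ * p : ℤ) : ℝ)| ≤ p * |q * x - k₂| + q * |p * x - k₁| := by
          rw [hsplit]
          refine (abs_sub _ _).trans_eq ?_
          simp only [abs_mul, Nat.abs_cast]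
      _ ≤ p * δ + q * δ := by gcongr
      _ < 1 := by linarith
  rw [← sub_eq_zero, ← Int.abs_lt_one_iff]
  exact_mod_cast key

theorem UnitAddCircle.norm_le_of_norm_nsmul_le {p q : ℕ} (hp : 0 < p) (hpq : p.Coprime q)
    {β : UnitAddCircle} {δ : ℝ} (h₁ : ‖p • β‖ ≤ δ) (h₂ : ‖q • β‖ ≤ δ) (hδ : (p + q) * δ < 1) :
    ‖β‖ ≤ δ / p := by
  obtain ⟨x, rfl⟩ := QuotientAddGroup.mk_surjective β
  change ‖((x : ℝ) : UnitAddCircle)‖ ≤ δ / p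
  rw [← AddCircle.coe_nsmul, nsmul_eq_mul, UnitAddCircle.norm_eq] at h₁ h₂
  have hk := Int.mul_eq_mul_of_abs_mul_sub_le h₁ h₂ hδ
  obtain ⟨m, hm⟩ : (p : ℤ) ∣ round (p * x) :=
    (Nat.isCoprime_iff_coprime.mpr hpq).dvd_of_dvd_mul_right ⟨round (q * x), by rw [hk, mul_comm]⟩
  have hp' : (0 : ℝ) < p := by exact_mod_cast hp
  calc ‖((x : ℝ) : UnitAddCircle)‖ ≤ |x - m| := UnitAddCircle.norm_eq ▸ round_le x m
    _ = |p * x - round (p * x)| / p := by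
        rw [hm, eq_div_iff hp'.ne', Int.cast_mul, Int.cast_natCast, ← mul_sub,
          abs_mul, Nat.abs_cast, mul_comm]
    _ ≤ δ / p := by gcongr

/-- Lemma 2.2 ("tg"): contagiousness of the phase relations. -/
theorem stmt_4 :
    ∃ C : ℝ, 1 ≤ C ∧
      ∀ (P ε : ℝ) (p₁ p₂ p₃ : ℕ) (α₁ α₂ α₃ α : UnitAddCircle),
        1 < P → 0 ≤ ε → ε < 1 / (C * P ^ 3) →
        p₁.Prime → p₂.Prime → p₃.Prime →
        p₁ ≠ p₂ → p₁ ≠ p₃ → p₂ ≠ p₃ →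
        P ≤ p₁ → (p₁ : ℝ) ≤ 2 * P →
        P ≤ p₂ → (p₂ : ℝ) ≤ 2 * P →
        P ≤ p₃ → (p₃ : ℝ) ≤ 2 * P →
        ‖p₁ • α₂ - p₂ • α₁‖ < ε →
        ‖p₁ • α₃ - p₃ • α₁‖ < ε →
        ‖p₂ • α₃ - p₃ • α₂‖ < ε →
        ‖p₁ • α - α₁‖ < ε / (2 * p₂) →
        ‖p₂ • α - α₂‖ < ε / (2 * p₁) →
        ‖p₃ • α - α₃‖ ≤ C * ε / P := by
  refine ⟨16, by norm_num, ?_⟩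
  intro P ε p₁ p₂ p₃ α₁ α₂ α₃ α hP hε hεP hp₁ hp₂ _ h₁₂ _ _ hPp₁ hp₁P hPp₂ hp₂P _ hp₃P
    _ h₁₃ h₂₃ hα₁ hα₂
  have hP₀ : 0 < P := by linarith
  have hsmall : 8 * P * ε < 1 := by
    rw [lt_div_iff₀ (by positivity)] at hεP
    nlinarith [one_le_pow₀ (M₀ := ℝ) hP.le (n := 2)]
  have hβ₁ : ‖p₁ • (p₃ • α - α₃)‖ ≤ 2 * ε :=
    norm_nsmul_nsmul_sub_le_two_mul hp₂.pos (by linarith) hα₁.le h₁₃.le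
  have hβ₂ : ‖p₂ • (p₃ • α - α₃)‖ ≤ 2 * ε :=
    norm_nsmul_nsmul_sub_le_two_mul hp₁.pos (by linarith) hα₂.le h₂₃.le
  calc ‖p₃ • α - α₃‖ ≤ 2 * ε / p₁ :=
        UnitAddCircle.norm_le_of_norm_nsmul_le hp₁.pos ((Nat.coprime_primes hp₁ hp₂).mpr h₁₂)
          hβ₁ hβ₂ (by nlinarith)
    _ ≤ 2 * ε / P := by gcongr
    _ ≤ 16 * ε / P := by gcongr; norm_num
end

section
/- There exists an absolute constant C ≥ 1 such that the following holds. Let P > 1 and 0 ≤ ε < 1/(C·P⁴). Let p₁, p₂, q₁, q₂ be distinct primes in [P, 2P] and let α_{p₁}, α_{p₂}, α_{q₁}, α_{q₂} ∈ ℝ/ℤ satisfy ‖pᵢ·α_{qⱼ} − qⱼ·α_{pᵢ}‖ < ε for all i, j ∈ {1,2}. Then ‖p₁·α_{p₂} − p₂·α_{p₁}‖ ≤ C·ε. -/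
/-!
Put `β = p₁ • α_{p₂} - p₂ • α_{p₁}`. For each `q`,
`q • β = p₂ • (p₁ • α_q - q • α_{p₁}) - p₁ • (p₂ • α_q - q • α_{p₂})`, so `‖q • β‖ ≤ 4Pε`
for `q = q₁, q₂`. Lifting `β` to `x ∈ ℝ` with `q₁ x ≈ k`, `q₂ x ≈ l`, the integer `k q₂ - l q₁`
has absolute value `< 1` when `ε` is small, so it vanishes; coprimality then gives `q₁ ∣ k`,
i.e. `x` is within `4Pε / q₁ ≤ 4ε` of an integer.
-/

theorem norm_nsmul_sub_nsmul_le {A : Type*} [SeminormedAddCommGroup A] (p₁ p₂ q : ℕ)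
    (a b c : A) :
    ‖q • (p₁ • b - p₂ • a)‖ ≤ p₂ * ‖p₁ • c - q • a‖ + p₁ * ‖p₂ • c - q • b‖ := by
  have h : q • (p₁ • b - p₂ • a) = p₂ • (p₁ • c - q • a) - p₁ • (p₂ • c - q • b) := by
    simp only [smul_sub, smul_smul, mul_comm]; abel
  rw [h]
  exact (norm_sub_le _ _).trans (add_le_add (norm_nsmul_le ..) (norm_nsmul_le ..))

theorem UnitAddCircle.natCast_mul_norm_le_of_coprime {m n : ℕ} (hmn : m.Coprime n)
    {β : UnitAddCircle} {δ : ℝ} (hm : ‖m • β‖ ≤ δ) (hn : ‖n • β‖ ≤ δ)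
    (hδ : (m + n) * δ < 1) : m * ‖β‖ ≤ δ := by
  obtain ⟨x, rfl⟩ := QuotientAddGroup.mk_surjective β
  rw [← AddCircle.coe_nsmul, nsmul_eq_mul, UnitAddCircle.norm_eq] at hm hn
  set k := round (m * x)
  set l := round (n * x)
  have hkl : k * n = l * m := by
    suffices |((k * n - l * m : ℤ) : ℝ)| < 1 by
      rw [← Int.cast_abs, ← Int.cast_one, Int.cast_lt, Int.abs_lt_one_iff] at this
      omega
    calc |((k * n - l * m : ℤ) : ℝ)| = |m * (n * x - l) - n * (m * x - k)| := by
          push_cast; congr 1; ring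
      _ ≤ m * |n * x - l| + n * |m * x - k| := by
          refine (abs_sub _ _).trans (add_le_add ?_ ?_) <;> simp [abs_mul]
      _ ≤ m * δ + n * δ := by gcongr
      _ < 1 := by linarith
  obtain ⟨r, hr⟩ : (m : ℤ) ∣ k :=
    (Nat.Coprime.isCoprime hmn).dvd_of_dvd_mul_right ⟨l, by rw [hkl, mul_comm]⟩
  rw [hr] at hm
  calc m * ‖(x : UnitAddCircle)‖ ≤ m * |x - r| := by
        gcongr; rw [UnitAddCircle.norm_eq]; exact round_le x r
    _ = |m * x - ((m * r : ℤ) : ℝ)| := by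
        push_cast; rw [← mul_sub, abs_mul, Nat.abs_cast]
    _ ≤ δ := hm

/-- Lemma 2.3: two pairs of primes, each element of one pair compatible with each of
the other pair, forces compatibility within the first pair. -/
theorem stmt_6 :
    ∃ C : ℝ, 1 ≤ C ∧
      ∀ (P ε : ℝ) (p₁ p₂ q₁ q₂ : ℕ)
        (αp₁ αp₂ αq₁ αq₂ : UnitAddCircle),
        1 < P → 0 ≤ ε → ε < 1 / (C * P ^ 4) →
        p₁.Prime → p₂.Prime → q₁.Prime → q₂.Prime →
        p₁ ≠ p₂ → p₁ ≠ q₁ → p₁ ≠ q₂ → p₂ ≠ q₁ → p₂ ≠ q₂ → q₁ ≠ q₂ →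
        P ≤ p₁ → (p₁ : ℝ) ≤ 2 * P → P ≤ p₂ → (p₂ : ℝ) ≤ 2 * P →
        P ≤ q₁ → (q₁ : ℝ) ≤ 2 * P → P ≤ q₂ → (q₂ : ℝ) ≤ 2 * P →
        ‖p₁ • αq₁ - q₁ • αp₁‖ < ε →
        ‖p₁ • αq₂ - q₂ • αp₁‖ < ε →
        ‖p₂ • αq₁ - q₁ • αp₂‖ < ε →
        ‖p₂ • αq₂ - q₂ • αp₂‖ < ε →
        ‖p₁ • αp₂ - p₂ • αp₁‖ ≤ C * ε := by
  refine ⟨16, by norm_num, ?_⟩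
  intro P ε p₁ p₂ q₁ q₂ αp₁ αp₂ αq₁ αq₂ hP hε hεP _ _ hq₁ hq₂ _ _ _ _ _ hq₁₂
    _ hp₁ _ hp₂ hPq₁ hq₁P _ hq₂P h₁₁ h₁₂ h₂₁ h₂₂
  have hq_bound (q : ℕ) (αq : UnitAddCircle) (h₁ : ‖p₁ • αq - q • αp₁‖ < ε)
      (h₂ : ‖p₂ • αq - q • αp₂‖ < ε) : ‖q • (p₁ • αp₂ - p₂ • αp₁)‖ ≤ 4 * P * ε :=
    calc _ ≤ p₂ * ‖p₁ • αq - q • αp₁‖ + p₁ * ‖p₂ • αq - q • αp₂‖ :=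
          norm_nsmul_sub_nsmul_le p₁ p₂ q αp₁ αp₂ αq
      _ ≤ 2 * P * ε + 2 * P * ε := by gcongr
      _ = 4 * P * ε := by ring
  have hsmall : (q₁ + q₂ : ℝ) * (4 * P * ε) < 1 :=
    calc (q₁ + q₂ : ℝ) * (4 * P * ε) ≤ (2 * P + 2 * P) * (4 * P * ε) := by gcongr
      _ = 16 * P ^ 2 * ε := by ring
      _ ≤ 16 * P ^ 4 * ε := by gcongr; exacts [hP.le, by norm_num]
      _ < 1 := by rwa [lt_div_iff₀ (by positivity), mul_comm] at hεP
  have hβ := UnitAddCircle.natCast_mul_norm_le_of_coprime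
    ((Nat.coprime_primes hq₁ hq₂).mpr hq₁₂) (hq_bound q₁ αq₁ h₁₁ h₂₁) (hq_bound q₂ αq₂ h₁₂ h₂₂)
    hsmall
  nlinarith [norm_nonneg (p₁ • αp₂ - p₂ • αp₁)]
end

section
/- There exist absolute constants C ≥ 1 and c > 0 such that: let P > 1, 0 ≤ ε < 1/(C·P²), let S be a finite set of primes contained in [P, 2P], and for each p ∈ S let α_p ∈ ℝ/ℤ. Suppose the number of ordered pairs (p₁, p₂) ∈ S × S with ‖p₁·α_{p₂} − p₂·α_{p₁}‖ < ε is at least |S|²/C. Then there exists α ∈ ℝ/ℤ such that ‖p·α − α_p‖ ≤ C·ε/P for at least c·|S| primes p ∈ S. -/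
/-!
Rigidity: if `‖r • z‖` and `‖s • z‖` are small for coprime `r, s`, the short lifts `u, v` of
`r • z, s • z` satisfy `s u = r v` exactly, so Bézout gives `z = u / r`, i.e. `z` is small.

Cauchy–Schwarz on codegrees yields distinct primes `p₁, p₂ ∈ S` with `≫ |S|` common compatible
partners `q`. For two such partners `q, q'`, the identity
`p • (q • α q' - q' • α q) = q • (p • α q' - q' • α p) - q' • (p • α q - q • α p)` with `p = p₁, p₂`
and rigidity show that `q, q'` are compatible as well. Fix a partner `q₁ ≠ p₁` and choose `β` with
`p₁ • β = α p₁` and `q₁ • β ≈ α q₁`; rigidity for `(p₁, q₁)` applied to `q • β - α q` then gives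
`‖q • β - α q‖ ≤ ε / P` for every common partner `q`. When `|S|` is bounded one prime suffices.
-/

namespace UnitAddCircle

theorem exists_coe_eq_and_abs_eq_norm (x : UnitAddCircle) :
    ∃ t : ℝ, (t : UnitAddCircle) = x ∧ |t| = ‖x‖ := by
  obtain ⟨t, rfl⟩ := QuotientAddGroup.mk_surjective x
  refine ⟨t - round t, ?_, (norm_eq (x := t)).symm⟩
  rw [AddCircle.coe_sub, sub_eq_self, AddCircle.coe_eq_zero_iff]
  exact ⟨round t, by simp⟩

theorem eq_zero_of_coe_eq_zero {t : ℝ} (h : (t : UnitAddCircle) = 0) (ht : |t| < 1) : t = 0 := by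
  obtain ⟨n, rfl⟩ := (AddCircle.coe_eq_zero_iff _).1 h
  rw [zsmul_one] at ht ⊢
  have : |n| < 1 := by exact_mod_cast ht
  simp [Int.abs_lt_one_iff.1 this]

theorem norm_coe_div_le (t : ℝ) (r : ℕ) : ‖((t / r : ℝ) : UnitAddCircle)‖ ≤ |t| / r := by
  refine QuotientAddGroup.norm_mk_le_norm.trans_eq ?_
  rw [Real.norm_eq_abs, abs_div, Nat.abs_cast]

theorem nsmul_coe_div {r : ℕ} (hr : r ≠ 0) (t : ℝ) :
    r • ((t / r : ℝ) : UnitAddCircle) = t := by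
  rw [← AddCircle.coe_nsmul, nsmul_eq_mul, mul_div_cancel₀ _ (by exact_mod_cast hr)]

theorem norm_le_of_norm_nsmul_le_s8 {r s : ℕ} (hrs : r.Coprime s) (hr : r ≠ 0) {z : UnitAddCircle}
    {δ₁ δ₂ : ℝ} (h₁ : ‖r • z‖ ≤ δ₁) (h₂ : ‖s • z‖ ≤ δ₂) (hδ : s * δ₁ + r * δ₂ < 1) :
    ‖z‖ ≤ δ₁ / r := by
  obtain ⟨u, hu, hu_abs⟩ := exists_coe_eq_and_abs_eq_norm (r • z)
  obtain ⟨v, hv, hv_abs⟩ := exists_coe_eq_and_abs_eq_norm (s • z)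
  have hr' : (0 : ℝ) < r := by exact_mod_cast Nat.pos_of_ne_zero hr
  -- `s • (r • z) = r • (s • z)`, and the lifts are too short to differ by a nonzero integer
  have hsu : s * u = r * v := by
    refine sub_eq_zero.1 (eq_zero_of_coe_eq_zero ?_ ?_)
    · rw [AddCircle.coe_sub, ← nsmul_eq_mul, ← nsmul_eq_mul, AddCircle.coe_nsmul,
        AddCircle.coe_nsmul, hu, hv, smul_smul, smul_smul, mul_comm, sub_self]
    · calc |s * u - r * v| ≤ s * |u| + r * |v| := by
            simpa [abs_mul] using abs_sub (s * u) (r * v)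
        _ ≤ s * δ₁ + r * δ₂ := by rw [hu_abs, hv_abs]; gcongr
        _ < 1 := hδ
  obtain ⟨a, b, hab⟩ := Nat.Coprime.isCoprime hrs
  have hz : z = ((u / r : ℝ) : UnitAddCircle) := by
    have hlift : a * u + b * v = u / r := by
      have hab' : (a : ℝ) * r + b * s = 1 := by exact_mod_cast hab
      field_simp
      linear_combination u * hab' - b * hsu
    calc z = (a * r + b * s : ℤ) • z := by rw [hab, one_smul]
      _ = ((a * u + b * v : ℝ) : UnitAddCircle) := by
        rw [add_smul, mul_smul, mul_smul, natCast_zsmul, natCast_zsmul, ← hu, ← hv,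
          AddCircle.coe_add, ← AddCircle.coe_zsmul, ← AddCircle.coe_zsmul, zsmul_eq_mul,
          zsmul_eq_mul]
      _ = _ := by rw [hlift]
  rw [hz]
  calc _ ≤ |u| / r := norm_coe_div_le u r
    _ ≤ δ₁ / r := by rw [hu_abs]; gcongr

theorem exists_nsmul_eq_and_norm_nsmul_sub_le {r s : ℕ} (hrs : r.Coprime s) (hr : r ≠ 0)
    (x y : UnitAddCircle) : ∃ β : UnitAddCircle, r • β = x ∧ ‖s • β - y‖ ≤ ‖r • y - s • x‖ / r := by
  obtain ⟨w, hw, hw_abs⟩ := exists_coe_eq_and_abs_eq_norm (r • y - s • x)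
  set γ : UnitAddCircle := ((w / r : ℝ) : UnitAddCircle)
  have hγ : r • γ = r • y - s • x := by rw [nsmul_coe_div hr, hw]
  obtain ⟨a, b, hab⟩ := hrs.isCoprime
  -- `a • x + b • y` solves both equations up to multiples of the defect `r • γ`
  refine ⟨a • x + b • y - b • γ, ?_, ?_⟩
  · simp only [← natCast_zsmul] at hγ ⊢
    linear_combination (norm := module) (-b) • hγ + hab • x
  · have hsβ : s • (a • x + b • y - b • γ) - y = -γ := by
      simp only [← natCast_zsmul] at hγ ⊢
      linear_combination (norm := module) a • hγ + hab • (y - γ)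
    rw [hsβ, norm_neg, ← hw_abs]
    exact norm_coe_div_le w r

end UnitAddCircle

open Finset

namespace Finset

variable {ι κ : Type*} (s : Finset ι) (t : Finset κ) (R : ι → κ → Prop) [DecidableRel R]

theorem card_filter_product_eq_sum :
    #((s ×ˢ t).filter fun x => R x.1 x.2) = ∑ b ∈ t, #(s.filter (R · b)) := by
  simp only [card_filter, sum_product_right]

theorem sum_sum_card_filter_and_eq_sum_sq :
    ∑ a ∈ s, ∑ a' ∈ s, #(t.filter fun b => R a b ∧ R a' b) = ∑ b ∈ t, #(s.filter (R · b)) ^ 2 := by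
  simp only [card_filter, sq, sum_mul_sum, ite_zero_mul_ite_zero, mul_one]
  exact (sum_congr rfl fun _ _ => sum_comm).trans sum_comm

theorem exists_ne_le_card_filter_and {s : Finset ι} {R : ι → ι → Prop} [DecidableRel R] {C : ℝ}
    (hC : 0 < C) (hs : 2 * C ^ 2 < #s)
    (hR : (#s : ℝ) ^ 2 / C ≤ #((s ×ˢ s).filter fun x => R x.1 x.2)) :
    ∃ a ∈ s, ∃ a' ∈ s, a ≠ a' ∧ (#s : ℝ) / (2 * C ^ 2) ≤ #(s.filter fun b => R a b ∧ R a' b) := by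
  classical
  set N : ℝ := (#s : ℝ) with hN
  have hN0 : 0 < N := lt_of_le_of_lt (by positivity) hs
  by_contra! hsmall
  have hupper : ∑ a ∈ s, ∑ a' ∈ s, (#(s.filter fun b => R a b ∧ R a' b) : ℝ) ≤
      N * (N * (N / (2 * C ^ 2)) + N) := by
    calc _ ≤ ∑ a ∈ s, ∑ a' ∈ s, (N / (2 * C ^ 2) + if a = a' then N else 0) := by
          gcongr with a ha a' ha'
          by_cases h : a = a'
          · rw [if_pos h]
            have : (#(s.filter fun b => R a b ∧ R a' b) : ℝ) ≤ N := by
              rw [hN]; exact_mod_cast card_filter_le s _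
            linarith [show 0 ≤ N / (2 * C ^ 2) by positivity]
          · simpa [h] using (hsmall a ha a' ha' h).le
      _ = N * (N * (N / (2 * C ^ 2)) + N) := by simp [sum_add_distrib, N]; ring
  have hlower : N ^ 3 / C ^ 2 ≤ ∑ a ∈ s, ∑ a' ∈ s, (#(s.filter fun b => R a b ∧ R a' b) : ℝ) := by
    have hdeg : N ^ 2 / C ≤ ∑ b ∈ s, (#(s.filter (R · b)) : ℝ) := by
      exact_mod_cast card_filter_product_eq_sum s s R ▸ hR
    have hcs := sq_sum_le_card_mul_sum_sq (s := s) (f := fun b => (#(s.filter (R · b)) : ℝ))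
    have hcodeg : ∑ a ∈ s, ∑ a' ∈ s, (#(s.filter fun b => R a b ∧ R a' b) : ℝ) =
        ∑ b ∈ s, (#(s.filter (R · b)) : ℝ) ^ 2 := by
      exact_mod_cast sum_sum_card_filter_and_eq_sum_sq s s R
    rw [hcodeg, div_le_iff₀ (by positivity)]
    rw [div_le_iff₀ hC] at hdeg
    nlinarith
  have : N ^ 3 / C ^ 2 ≤ N * (N * (N / (2 * C ^ 2)) + N) := hlower.trans hupper
  rw [div_le_iff₀ (by positivity)] at this
  field_simp at this
  nlinarith

end Finset

section Compatibility

theorem nsmul_cross_eq {G : Type*} [AddCommGroup G] (f : ℕ → G) (a b c : ℕ) :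
    a • (b • f c - c • f b) = b • (a • f c - c • f a) - c • (a • f b - b • f a) := by
  simp only [← natCast_zsmul]
  module

theorem norm_nsmul_cross_le {G : Type*} [SeminormedAddCommGroup G] (f : ℕ → G) (a b c : ℕ) :
    ‖a • (b • f c - c • f b)‖ ≤ b * ‖a • f c - c • f a‖ + c * ‖a • f b - b • f a‖ := by
  rw [nsmul_cross_eq]
  exact (norm_sub_le _ _).trans (add_le_add norm_nsmul_le norm_nsmul_le)

variable {α : ℕ → UnitAddCircle} {P ε : ℝ}

theorem norm_cross_le_of_anchors {p₁ p₂ q q' : ℕ} (hP : 0 < P) (hp : p₁.Coprime p₂)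
    (hp₁ : P ≤ p₁) (hp₁' : (p₁ : ℝ) ≤ 2 * P) (hp₂' : (p₂ : ℝ) ≤ 2 * P)
    (hq : (q : ℝ) ≤ 2 * P) (hq' : (q' : ℝ) ≤ 2 * P) (hε : 16 * P ^ 2 * ε < 1)
    (h₁ : ‖p₁ • α q - q • α p₁‖ ≤ ε) (h₁' : ‖p₁ • α q' - q' • α p₁‖ ≤ ε)
    (h₂ : ‖p₂ • α q - q • α p₂‖ ≤ ε) (h₂' : ‖p₂ • α q' - q' • α p₂‖ ≤ ε) :
    ‖q • α q' - q' • α q‖ ≤ 4 * ε := by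
  have hε0 : 0 ≤ ε := (norm_nonneg _).trans h₁
  have hp₁0 : (0 : ℝ) < p₁ := hP.trans_le hp₁
  have hanchor : ∀ p : ℕ, ‖p • α q - q • α p‖ ≤ ε → ‖p • α q' - q' • α p‖ ≤ ε →
      ‖p • (q • α q' - q' • α q)‖ ≤ 4 * P * ε := by
    intro p h h'
    calc _ ≤ q * ‖p • α q' - q' • α p‖ + q' * ‖p • α q - q • α p‖ := norm_nsmul_cross_le α p q q'
      _ ≤ 2 * P * ε + 2 * P * ε := by gcongr
      _ = 4 * P * ε := by ring
  have hsmall : p₂ * (4 * P * ε) + p₁ * (4 * P * ε) < 1 := by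
    calc _ ≤ 2 * P * (4 * P * ε) + 2 * P * (4 * P * ε) := by gcongr
      _ = 16 * P ^ 2 * ε := by ring
      _ < 1 := hε
  calc _ ≤ 4 * P * ε / p₁ :=
        UnitAddCircle.norm_le_of_norm_nsmul_le_s8 hp (Nat.cast_pos.1 hp₁0).ne'
          (hanchor p₁ h₁ h₁') (hanchor p₂ h₂ h₂') hsmall
    _ ≤ 4 * P * ε / P := by gcongr
    _ = 4 * ε := by field_simp

theorem exists_approx_of_anchors {p₁ p₂ q₁ : ℕ} (hP : 1 ≤ P) (h₁₂ : p₁.Coprime p₂)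
    (h₁q₁ : p₁.Coprime q₁) (hp₁ : P ≤ p₁) (hp₁' : (p₁ : ℝ) ≤ 2 * P) (hp₂' : (p₂ : ℝ) ≤ 2 * P)
    (hq₁' : (q₁ : ℝ) ≤ 2 * P) (hε : 16 * P ^ 2 * ε < 1)
    (hq₁ : ‖p₁ • α q₁ - q₁ • α p₁‖ ≤ ε) (hq₂ : ‖p₂ • α q₁ - q₁ • α p₂‖ ≤ ε) :
    ∃ β : UnitAddCircle, ∀ q : ℕ, (q : ℝ) ≤ 2 * P →
      ‖p₁ • α q - q • α p₁‖ ≤ ε → ‖p₂ • α q - q • α p₂‖ ≤ ε → ‖q • β - α q‖ ≤ ε / P := by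
  have hP0 : 0 < P := zero_lt_one.trans_le hP
  have hε0 : 0 ≤ ε := (norm_nonneg _).trans hq₁
  have hp₁0 : (0 : ℝ) < p₁ := hP0.trans_le hp₁
  obtain ⟨β, hβ, hβq₁⟩ :=
    UnitAddCircle.exists_nsmul_eq_and_norm_nsmul_sub_le h₁q₁ (Nat.cast_pos.1 hp₁0).ne' (α p₁) (α q₁)
  refine ⟨β, fun q hq h₁ h₂ => ?_⟩
  have hβq₁' : ‖q₁ • β - α q₁‖ ≤ ε / P :=
    hβq₁.trans ((div_le_div_of_nonneg_right hq₁ hp₁0.le).trans (by gcongr))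
  have hcross : ‖q₁ • α q - q • α q₁‖ ≤ 4 * ε :=
    norm_cross_le_of_anchors hP0 h₁₂ hp₁ hp₁' hp₂' hq₁' hq hε hq₁ h₁ hq₂ h₂
  have hy₁ : ‖p₁ • (q • β - α q)‖ ≤ ε := by
    rw [show p₁ • (q • β - α q) = -(p₁ • α q - q • α p₁) by rw [← hβ]; module, norm_neg]
    exact h₁
  have hy₂ : ‖q₁ • (q • β - α q)‖ ≤ 6 * ε := by
    rw [show q₁ • (q • β - α q) = q • (q₁ • β - α q₁) - (q₁ • α q - q • α q₁) by module]
    calc _ ≤ q * ‖q₁ • β - α q₁‖ + ‖q₁ • α q - q • α q₁‖ :=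
          (norm_sub_le _ _).trans (add_le_add norm_nsmul_le le_rfl)
      _ ≤ 2 * P * (ε / P) + 4 * ε := by gcongr
      _ = 6 * ε := by field_simp; ring
  have hsmall : q₁ * ε + p₁ * (6 * ε) < 1 := by
    calc _ ≤ 2 * P * ε + 2 * P * (6 * ε) := by gcongr
      _ ≤ 16 * P ^ 2 * ε := by nlinarith [mul_nonneg (mul_nonneg hP0.le hε0) (sub_nonneg.2 hP)]
      _ < 1 := hε
  calc _ ≤ ε / p₁ :=
        UnitAddCircle.norm_le_of_norm_nsmul_le_s8 h₁q₁ (Nat.cast_pos.1 hp₁0).ne' hy₁ hy₂ hsmall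
    _ ≤ ε / P := by gcongr

end Compatibility

/-- Lemma 2.4 ("conc"): if a positive proportion of pairs of frequencies satisfy the
compatibility relation, a positive proportion are simultaneously approximated by
multiples of a single frequency. -/
theorem stmt_8 :
    ∃ C c : ℝ, 1 ≤ C ∧ 0 < c ∧
      ∀ (P ε : ℝ) (S : Finset ℕ) (α : ℕ → UnitAddCircle),
        1 < P → 0 ≤ ε → ε < 1 / (C * P ^ 2) →
        (∀ p ∈ S, p.Prime ∧ P ≤ p ∧ (p : ℝ) ≤ 2 * P) →
        ((S.card : ℝ) ^ 2 / C ≤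
          ((S ×ˢ S).filter
            (fun q => ‖q.1 • α q.2 - q.2 • α q.1‖ < ε)).card) →
        ∃ β : UnitAddCircle,
          c * S.card ≤
            (S.filter (fun p => ‖p • β - α p‖ ≤ C * ε / P)).card := by
  refine ⟨16, 1 / 1024, by norm_num, by norm_num, fun P ε S α hP _ hε hS hpairs => ?_⟩
  have hε' : 16 * P ^ 2 * ε < 1 := by rwa [lt_div_iff₀ (by positivity), mul_comm] at hε
  by_cases hlarge : (1024 : ℝ) ≤ #S
  · obtain ⟨p₁, hp₁S, p₂, hp₂S, h₁₂, hW⟩ :=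
      exists_ne_le_card_filter_and (R := fun p q => ‖p • α q - q • α p‖ < ε)
        (by norm_num : (0 : ℝ) < 16) (by linarith) hpairs
    set W := S.filter fun q => ‖p₁ • α q - q • α p₁‖ < ε ∧ ‖p₂ • α q - q • α p₂‖ < ε
    obtain ⟨q₁, hq₁W, hq₁p₁⟩ : ∃ q₁ ∈ W, q₁ ≠ p₁ := by
      refine Finset.Nontrivial.exists_ne (one_lt_card_iff_nontrivial.1 ?_) p₁
      exact_mod_cast (by linarith : (1 : ℝ) < #W)
    obtain ⟨hq₁S, hq₁, hq₂⟩ := mem_filter.1 hq₁W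
    obtain ⟨hp₁, hp₁P, hp₁P'⟩ := hS p₁ hp₁S
    obtain ⟨hq₁', -, hq₁P'⟩ := hS q₁ hq₁S
    obtain ⟨β, hβ⟩ := exists_approx_of_anchors hP.le
      ((Nat.coprime_primes hp₁ (hS p₂ hp₂S).1).2 h₁₂) ((Nat.coprime_primes hp₁ hq₁').2 hq₁p₁.symm)
      hp₁P hp₁P' (hS p₂ hp₂S).2.2 hq₁P' hε' hq₁.le hq₂.le
    refine ⟨β, ?_⟩
    have hWgood : W ⊆ S.filter fun p => ‖p • β - α p‖ ≤ 16 * ε / P := fun q hq => by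
      obtain ⟨hqS, h₁, h₂⟩ := mem_filter.1 hq
      refine mem_filter.2 ⟨hqS, (hβ q (hS q hqS).2.2 h₁.le h₂.le).trans ?_⟩
      gcongr
      linarith
    calc 1 / 1024 * (#S : ℝ) ≤ #S / (2 * 16 ^ 2) := by linarith
      _ ≤ #W := hW
      _ ≤ _ := by exact_mod_cast card_le_card hWgood
  · obtain rfl | ⟨p₀, hp₀⟩ := S.eq_empty_or_nonempty
    · exact ⟨0, by simp⟩
    obtain ⟨t, ht⟩ := QuotientAddGroup.mk_surjective (α p₀)
    set β : UnitAddCircle := ((t / p₀ : ℝ) : UnitAddCircle)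
    have hβ : p₀ • β = α p₀ := by rw [UnitAddCircle.nsmul_coe_div (hS p₀ hp₀).1.ne_zero, ht]
    refine ⟨β, ?_⟩
    have hp₀good : p₀ ∈ S.filter fun p => ‖p • β - α p‖ ≤ 16 * ε / P :=
      mem_filter.2 ⟨hp₀, by rw [hβ, sub_self, norm_zero]; positivity⟩
    calc 1 / 1024 * (#S : ℝ) ≤ 1 := by linarith
      _ ≤ _ := by exact_mod_cast card_pos.2 ⟨p₀, hp₀good⟩
end

section
/- (Vinogradov's lemma) Let α ∈ ℝ/ℤ, let 0 < ε < 1/100, 100·ε < δ < 1, and let N be a positive real with δ·N > 100. Suppose ‖n·α‖ < ε for at least δ·N integers n ∈ [−N, N]. Then there exist integers a and q with 1 ≤ q ≤ C/δ and |a| ≤ C/δ for an absolute constant C, such that ‖α − a/q‖ ≤ C·ε/(δ·N), where a/q is viewed in ℝ/ℤ. -/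
/-!
Dirichlet's theorem with parameter `Q ≈ δN/ε` gives `a/q` with `q ≤ Q` and
`q‖α - a/q‖ ≲ ε/(δN)`, so every `n ∈ [-N, N]` with `‖nα‖ < ε` satisfies
`‖n a/q‖ ≤ η := ε + O(ε/(δq))`. As `a` is coprime to `q`, the residue `n a mod q` determines
`n mod q`, so at most `(2qη + 1)(2N/q + 1)` such `n` exist. Since `qε ≲ δN` and `ε ≪ δ`,
comparing with the `δN` good `n` leaves only `δN ≲ N/q`, i.e. `q ≲ 1/δ`.
-/

open Finset

lemma Int.eq_of_modEq_of_ediv_eq {q m m' : ℤ} (hmod : m ≡ m' [ZMOD q]) (hdiv : m / q = m' / q) :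
    m = m' := by
  rw [← Int.emod_add_mul_ediv m q, ← Int.emod_add_mul_ediv m' q, hmod.eq, hdiv]

namespace UnitAddCircle

lemma norm_coe_le_abs (x : ℝ) : ‖(x : UnitAddCircle)‖ ≤ |x| := QuotientAddGroup.norm_mk_le_norm

lemma norm_zsmul_coe_le (n : ℤ) (x y : ℝ) :
    ‖n • (y : UnitAddCircle)‖ ≤ ‖n • (x : UnitAddCircle)‖ + |(n : ℝ)| * |x - y| := by
  have h : n • (y : UnitAddCircle) =
      n • (x : UnitAddCircle) - n • ((x - y : ℝ) : UnitAddCircle) := by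
    rw [AddCircle.coe_sub, smul_sub, sub_sub_cancel]
  rw [h]
  refine (norm_sub_le _ _).trans (add_le_add le_rfl ?_)
  exact (norm_zsmul_le _ _).trans (mul_le_mul_of_nonneg_left (norm_coe_le_abs _) (norm_nonneg _))

lemma den_mul_norm_zsmul_coe_rat (r : ℚ) (n : ℤ) :
    (r.den : ℝ) * ‖n • ((r : ℝ) : UnitAddCircle)‖ =
      |((n * r.num - r.den * round ((n : ℚ) * r) : ℤ) : ℝ)| := by
  rw [← AddCircle.coe_zsmul, zsmul_eq_mul, UnitAddCircle.norm_eq, ← Rat.cast_intCast n,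
    ← Rat.cast_mul, Rat.round_cast, ← abs_of_pos (show (0 : ℝ) < r.den by positivity), ← abs_mul]
  have hnum : (r.num : ℝ) = r * r.den := by exact_mod_cast (Rat.mul_den_eq_num r).symm
  push_cast
  rw [hnum]
  ring_nf

/-- With `r = a/q` in lowest terms, `n ↦ (n a - q round (n r), (n + M) / q)` is injective on this
set because `a` is coprime to `q`, and its first coordinate is at most `qη` in absolute value. -/
theorem card_filter_norm_zsmul_coe_rat_le (r : ℚ) (M : ℕ) {η : ℝ} (hη : 0 ≤ η) :
    (#{n ∈ Icc (-(M : ℤ)) M | ‖n • ((r : ℝ) : UnitAddCircle)‖ ≤ η} : ℝ) ≤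
      (2 * r.den * η + 1) * (2 * M / r.den + 1) := by
  set q := r.den
  set S := {n ∈ Icc (-(M : ℤ)) M | ‖n • ((r : ℝ) : UnitAddCircle)‖ ≤ η}
  set E := ⌊q * η⌋
  set t : ℤ → ℤ := fun n ↦ n * r.num - q * round ((n : ℚ) * r)
  have hq : (0 : ℤ) < q := mod_cast r.den_pos
  have hE : 0 ≤ E := Int.floor_nonneg.mpr (by positivity)
  have hmaps : ∀ n ∈ S,
      (t n, (n + M) / (q : ℤ)) ∈ Icc (-E) E ×ˢ Icc 0 ((2 * M / q : ℕ) : ℤ) := by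
    intro n hn
    obtain ⟨hnM, hnη⟩ := mem_filter.mp hn
    rw [mem_Icc] at hnM
    have ht : |t n| ≤ E := by
      rw [Int.le_floor, Int.cast_abs, ← den_mul_norm_zsmul_coe_rat]
      gcongr
    rw [mem_product, mem_Icc, mem_Icc, Int.natCast_div]
    exact ⟨abs_le.mp ht, Int.ediv_nonneg (by omega) hq.le, Int.ediv_le_ediv hq (by omega)⟩
  have hinj : Set.InjOn (fun n ↦ (t n, (n + M) / (q : ℤ))) S := by
    intro n _ n' _ h
    obtain ⟨ht, hdiv⟩ := Prod.mk.inj h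
    have hmod : n + M ≡ n' + M [ZMOD q] := by
      refine Int.ModEq.add_right _ (Int.modEq_iff_dvd.mpr ?_).symm
      refine r.isCoprime_num_den.symm.dvd_of_dvd_mul_right
        ⟨round ((n : ℚ) * r) - round ((n' : ℚ) * r), ?_⟩
      linear_combination ht
    simpa using Int.eq_of_modEq_of_ediv_eq hmod hdiv
  have hcard := card_le_card_of_injOn _ hmaps hinj
  rw [card_product, Int.card_Icc, Int.card_Icc] at hcard
  have hcardE : ((E + 1 - -E).toNat : ℝ) ≤ 2 * q * η + 1 := by
    rw [← Int.cast_natCast, Int.toNat_of_nonneg (by omega)]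
    push_cast
    linarith [Int.floor_le ((q : ℝ) * η)]
  have hcardM : ((((2 * M / q : ℕ) : ℤ) + 1 - 0).toNat : ℝ) ≤ 2 * M / q + 1 := by
    rw [sub_zero, ← Nat.cast_add_one, Int.toNat_natCast]
    have h := Nat.cast_div_le (α := ℝ) (m := 2 * M) (n := q)
    push_cast at h ⊢
    linarith
  calc (#S : ℝ) ≤ ((E + 1 - -E).toNat : ℝ) * ((((2 * M / q : ℕ) : ℤ) + 1 - 0).toNat : ℝ) := by
        exact_mod_cast hcard
    _ ≤ (2 * q * η + 1) * (2 * M / q + 1) := by gcongr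

theorem card_filter_norm_zsmul_lt_le (x : ℝ) (r : ℚ) {ε N : ℝ} (hε : 0 ≤ ε) (hN : 0 ≤ N) :
    (#{n ∈ Icc (-⌊N⌋) ⌊N⌋ | ‖n • (x : UnitAddCircle)‖ < ε} : ℝ) ≤
      (2 * r.den * ε + 2 * N * (r.den * |x - r|) + 1) * (2 * N / r.den + 1) := by
  have hsub : {n ∈ Icc (-⌊N⌋) ⌊N⌋ | ‖n • (x : UnitAddCircle)‖ < ε} ⊆
      {n ∈ Icc (-(⌊N⌋₊ : ℤ)) ⌊N⌋₊ | ‖n • ((r : ℝ) : UnitAddCircle)‖ ≤ ε + N * |x - r|} := by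
    intro n hn
    rw [Int.natCast_floor_eq_floor hN]
    obtain ⟨hnN, hnε⟩ := mem_filter.mp hn
    refine mem_filter.mpr ⟨hnN, (norm_zsmul_coe_le n x r).trans ?_⟩
    have hn : |(n : ℝ)| ≤ N := by
      rw [mem_Icc, ← Int.cast_le (R := ℝ), ← Int.cast_le (R := ℝ)] at hnN
      push_cast at hnN
      exact abs_le.mpr ⟨by linarith [Int.floor_le N], by linarith [Int.floor_le N]⟩
    gcongr
  calc _ ≤ _ := by exact_mod_cast card_le_card hsub
    _ ≤ (2 * r.den * (ε + N * |x - r|) + 1) * (2 * ⌊N⌋₊ / r.den + 1) :=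
      card_filter_norm_zsmul_coe_rat_le r _ (by positivity)
    _ ≤ _ := by
      rw [show 2 * r.den * (ε + N * |x - r|) = 2 * r.den * ε + 2 * N * (r.den * |x - r|) by ring]
      gcongr
      exact Nat.floor_le hN

end UnitAddCircle

lemma Real.exists_rat_den_le_and_den_mul_abs_sub_le (x : ℝ) {L : ℝ} (hL : 0 < L) :
    ∃ r : ℚ, (r.den : ℝ) ≤ L + 1 ∧ r.den * |x - r| ≤ 1 / L := by
  obtain ⟨r, hxr, hden⟩ := Real.exists_rat_abs_sub_le_and_den_le x (Nat.ceil_pos.mpr hL)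
  refine ⟨r, (Nat.cast_le.mpr hden).trans (Nat.ceil_lt_add_one hL.le).le, ?_⟩
  calc r.den * |x - r| ≤ r.den * (1 / ((⌈L⌉₊ + 1) * r.den)) := by gcongr
    _ = 1 / (⌈L⌉₊ + 1) := by field_simp
    _ ≤ 1 / L := by gcongr; linarith [Nat.le_ceil L]

lemma Rat.abs_num_le_two_mul_den {x : ℝ} {r : ℚ} (hx : |x| ≤ 1) (hxr : |x - r| ≤ 1) :
    |(r.num : ℝ)| ≤ 2 * r.den := by
  have hr : |(r : ℝ)| ≤ 2 := by
    have h := abs_sub x (x - r)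
    rw [sub_sub_cancel] at h
    linarith
  calc |(r.num : ℝ)| = |(r : ℝ)| * r.den := by
        rw [Rat.cast_def, abs_div, Nat.abs_cast, div_mul_cancel₀]; positivity
    _ ≤ 2 * r.den := by gcongr

lemma le_five_div_of_le_mul {q ε δ N β : ℝ} (hq : 0 < q) (hε : 0 < ε) (hε1 : ε ≤ 1)
    (hεδ : 100 * ε < δ) (hδN : 100 < δ * N) (hqL : q ≤ δ * N / (50 * ε) + 1)
    (hβ : β ≤ 50 * ε / (δ * N)) (h : δ * N ≤ (2 * q * ε + 2 * N * β + 1) * (2 * N / q + 1)) :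
    q ≤ 5 / δ := by
  have hδ : 0 < δ := by linarith
  have hN : 0 < N := pos_of_mul_pos_right (by linarith) hδ.le
  have hNβ : 2 * N * β ≤ 1 := by
    calc 2 * N * β ≤ 2 * N * (50 * ε / (δ * N)) := by gcongr
      _ = 100 * ε / δ := by field_simp; ring
      _ ≤ 1 := by rw [div_le_one hδ]; linarith
  have hqε : q * ε ≤ δ * N / 50 + ε := by
    calc q * ε ≤ (δ * N / (50 * ε) + 1) * ε := by gcongr
      _ = δ * N / 50 + ε := by field_simp
  have hexpand : δ * N ≤ 4 * N * ε + 2 * q * ε + 4 * N / q + 2 := by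
    calc δ * N ≤ (2 * q * ε + 2) * (2 * N / q + 1) :=
          h.trans (mul_le_mul_of_nonneg_right (by linarith) (by positivity))
      _ = 4 * N * ε + 2 * q * ε + 4 * N / q + 2 := by field_simp; ring
  have hNε : 4 * N * ε ≤ δ * N / 25 := by nlinarith
  have hNq : 4 / 5 * (δ * N) ≤ 4 * N / q := by linarith
  rw [le_div_iff₀ hq] at hNq
  rw [le_div_iff₀ hδ]
  nlinarith

/-- Vinogradov's lemma. -/
theorem stmt_13 :
    ∃ C : ℝ, 1 ≤ C ∧
      ∀ (α : UnitAddCircle) (ε δ N : ℝ),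
        0 < ε → ε < 1 / 100 → 100 * ε < δ → δ < 1 → 0 < N → 100 < δ * N →
        δ * N ≤
          (((Finset.Icc (-⌊N⌋) ⌊N⌋).filter (fun n : ℤ => ‖n • α‖ < ε)).card : ℝ) →
        ∃ a q : ℤ, 1 ≤ q ∧ (q : ℝ) ≤ C / δ ∧ |(a : ℝ)| ≤ C / δ ∧
          ‖α - (((a : ℝ) / (q : ℝ) : ℝ) : UnitAddCircle)‖ ≤ C * ε / (δ * N) := by
  refine ⟨50, by norm_num, ?_⟩
  intro α ε δ N hε hε1 hεδ hδ1 hN hδN hcard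
  have hδ : 0 < δ := by linarith
  obtain ⟨y, rfl⟩ := QuotientAddGroup.mk_surjective α
  rw [← AddCircle.coe_fract y] at hcard ⊢
  obtain ⟨r, hrL, hrx⟩ := Real.exists_rat_den_le_and_den_mul_abs_sub_le (Int.fract y)
    (L := δ * N / (50 * ε)) (by positivity)
  rw [one_div_div] at hrx
  have hq : (1 : ℝ) ≤ r.den := mod_cast r.den_pos
  have hxr : |Int.fract y - r| ≤ 50 * ε / (δ * N) :=
    (le_mul_of_one_le_left (abs_nonneg _) hq).trans hrx
  have hqδ : (r.den : ℝ) ≤ 5 / δ := le_five_div_of_le_mul (by positivity) hε (by linarith) hεδ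
    hδN hrL hrx (hcard.trans (UnitAddCircle.card_filter_norm_zsmul_lt_le _ r hε.le hN.le))
  refine ⟨r.num, r.den, mod_cast r.den_pos, ?_, ?_, ?_⟩
  · exact hqδ.trans (by gcongr; norm_num)
  · have hfract : |Int.fract y| ≤ 1 := by
      rw [abs_of_nonneg (Int.fract_nonneg y)]; exact (Int.fract_lt_one y).le
    have hxr1 : |Int.fract y - r| ≤ 1 := hxr.trans (by rw [div_le_one (by positivity)]; linarith)
    calc |(r.num : ℝ)| ≤ 2 * r.den := Rat.abs_num_le_two_mul_den hfract hxr1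
      _ ≤ 50 / δ := by rw [le_div_iff₀ hδ] at hqδ ⊢; linarith
  · rw [Int.cast_natCast, ← Rat.cast_def, ← AddCircle.coe_sub]
    exact (UnitAddCircle.norm_coe_le_abs _).trans (hxr.trans (by gcongr))
end
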